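/- Let 𝒢 be a hyperbolic second countable Hausdorff étale groupoid with generating set S and length function l_S, μ an invariant Radon probability measure on 𝒢⁽⁰⁾, α ∈ (0,1) and p ∈ [1,∞). If the positive definite function φ_α(x) = α^{l_S(x)} belongs to ℒ^p_μ(𝒢), then the GNS representation of 𝒢 associated to φ_α is an ℒ^p_μ(𝒢)-representation. -/

import Mathlib

open scoped BigOperators ComplexConjugate ENNReal NNReal
open MeasureTheory Filter Topology

noncomputable section

instance : Fact ((1 : ℝ≥0∞) ≤ 2) := ⟨one_le_two⟩

/-- The ambient separable Hilbert space `ℓ²(ℕ, ℂ)`, in which the fibres of any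
Borel Hilbert bundle with a fundamental sequence may be realized. -/
abbrev Hamb : Type := lp (fun _ : ℕ => ℂ) 2

instance : MeasurableSpace Hamb := borel _
instance : BorelSpace Hamb := ⟨rfl⟩

/-- A bounded complex-valued function. -/
def BddFun {X : Type} (f : X → ℂ) : Prop := ∃ M : ℝ, ∀ x, ‖f x‖ ≤ M

/-- A (second countable locally compact Hausdorff) étale groupoid: a groupoid structure
on `G` (with total operations, the product being meaningful on composable pairs
`s x = r y`), such that inversion and multiplication are continuous and the range map
is a local homeomorphism.  The standing topological assumptions (Hausdorff, second
countable, locally compact) are imposed as typeclass assumptions in the theorems. -/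
structure EtaleGroupoid (G : Type) [TopologicalSpace G] where
  mul : G → G → G
  inv : G → G
  r : G → G
  s : G → G
  r_def : ∀ x, r x = mul x (inv x)
  s_def : ∀ x, s x = mul (inv x) x
  inv_inv : ∀ x, inv (inv x) = x
  s_inv : ∀ x, s (inv x) = r x
  mul_assoc' : ∀ x y z, s x = r y → s y = r z → mul (mul x y) z = mul x (mul y z)
  r_mul : ∀ x y, s x = r y → r (mul x y) = r x
  s_mul : ∀ x y, s x = r y → s (mul x y) = s y
  inv_mul_cancel' : ∀ x y, s x = r y → mul (inv x) (mul x y) = y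
  mul_inv_cancel' : ∀ x y, s x = r y → mul (mul x y) (inv y) = x
  continuous_inv : Continuous inv
  continuous_r : Continuous r
  continuous_s : Continuous s
  continuous_mul : ∀ x y : G, s x = r y → ∀ W : Set G, IsOpen W → mul x y ∈ W →
    ∃ U V : Set G, IsOpen U ∧ IsOpen V ∧ x ∈ U ∧ y ∈ V ∧
      ∀ x' ∈ U, ∀ y' ∈ V, s x' = r y' → mul x' y' ∈ W
  etale : ∀ x : G, ∃ U : Set G, IsOpen U ∧ x ∈ U ∧ Set.InjOn r U ∧
    ∀ V : Set G, V ⊆ U → IsOpen V → IsOpen (r '' V)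

namespace EtaleGroupoid

variable {G : Type} [TopologicalSpace G] [MeasurableSpace G]

/-- The unit space `𝒢⁽⁰⁾`. -/
def units (g : EtaleGroupoid G) : Set G := Set.range g.r

/-- The range fibre `𝒢^u = r⁻¹(u)`. -/
def rFiber (g : EtaleGroupoid G) (u : G) : Set G := {x | g.r x = u}

/-- The source fibre `𝒢_u = s⁻¹(u)`. -/
def sFiber (g : EtaleGroupoid G) (u : G) : Set G := {x | g.s x = u}

/-- Membership in `C_c(𝒢)`: continuous with compact support. -/
def IsCc (_g : EtaleGroupoid G) (f : G → ℂ) : Prop := Continuous f ∧ HasCompactSupport f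

/-- Convolution: `(f * h)(x) = Σ_{y ∈ 𝒢^{r(x)}} f(y) h(y⁻¹ x)`. -/
def conv (g : EtaleGroupoid G) (f h : G → ℂ) : G → ℂ :=
  fun x => ∑' y : g.rFiber (g.r x), f (y : G) * h (g.mul (g.inv (y : G)) x)

/-- The involution `f^*(x) = conj (f (x⁻¹))`. -/
def star' (g : EtaleGroupoid G) (f : G → ℂ) : G → ℂ := fun x => conj (f (g.inv x))

/-- Iterated convolution powers: `convIter g h n = h^{*(n+1)}`. -/
def convIter (g : EtaleGroupoid G) (h : G → ℂ) : ℕ → G → ℂ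
  | 0 => h
  | n + 1 => g.conv (convIter g h n) h

/-- `B(𝒢)`: bounded Borel functions. -/
def BG (_g : EtaleGroupoid G) : Set (G → ℂ) := {f | Measurable f ∧ BddFun f}

/-- `B_c(𝒢)`: compactly supported bounded Borel functions. -/
def Bc (_g : EtaleGroupoid G) : Set (G → ℂ) :=
  {f | Measurable f ∧ BddFun f ∧ HasCompactSupport f}

/-- `B_{0,l}(𝒢)`: bounded Borel functions which are locally `B₀`, i.e. whose
restriction to `𝒢(K)` vanishes at infinity for every compact `K ⊆ 𝒢⁽⁰⁾`. -/
def B0l (g : EtaleGroupoid G) : Set (G → ℂ) :=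
  {f | Measurable f ∧ BddFun f ∧
    ∀ K : Set G, K ⊆ g.units → IsCompact K → ∀ ε : ℝ, 0 < ε →
      ∃ C : Set G, IsCompact C ∧ ∀ x : G, g.r x ∈ K → g.s x ∈ K → x ∉ C → ‖f x‖ < ε}

/-- An algebraic ideal `D ⊴ B(𝒢)`. -/
structure IsBorelIdeal (g : EtaleGroupoid G) (D : Set (G → ℂ)) : Prop where
  subset_BG : D ⊆ g.BG
  add_mem : ∀ f ∈ D, ∀ h ∈ D, f + h ∈ D
  smul_mem : ∀ f ∈ D, ∀ c : ℂ, c • f ∈ D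
  mul_mem : ∀ f ∈ D, ∀ h ∈ g.BG, h * f ∈ D

/-- A positive definite function on the groupoid. -/
def IsPosDef (g : EtaleGroupoid G) (F : G → ℂ) : Prop :=
  ∀ u ∈ g.units, ∀ n : ℕ, ∀ x : Fin n → G, (∀ i, x i ∈ g.rFiber u) → ∀ c : Fin n → ℂ,
    0 ≤ (∑ i, ∑ j, conj (c i) * c j * F (g.mul (g.inv (x i)) (x j))).re ∧
    (∑ i, ∑ j, conj (c i) * c j * F (g.mul (g.inv (x i)) (x j))).im = 0

/-- A function is locally `C₀` (in norm) : restriction to `𝒢(K)` vanishes at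
infinity for every compact `K ⊆ 𝒢⁽⁰⁾`. -/
def IsLocallyC0 (g : EtaleGroupoid G) (F : G → ℂ) : Prop :=
  ∀ K : Set G, K ⊆ g.units → IsCompact K → ∀ ε : ℝ, 0 < ε →
    ∃ C : Set G, IsCompact C ∧ ∀ x : G, g.r x ∈ K → g.s x ∈ K → x ∉ C → ‖F x‖ < ε

/-- The Haagerup property for an étale groupoid. -/
def HaagerupProperty (g : EtaleGroupoid G) : Prop :=
  ∃ F : ℕ → G → ℂ, (∀ n, Continuous (F n)) ∧ (∀ n, g.IsPosDef (F n)) ∧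
    (∀ n, ∀ u ∈ g.units, F n u = 1) ∧
    (∀ K : Set G, IsCompact K → ∀ ε : ℝ, 0 < ε →
      ∃ N : ℕ, ∀ n : ℕ, N ≤ n → ∀ x ∈ K, ‖F n x - 1‖ < ε) ∧
    (∀ n, Continuous (F n) ∧ g.IsLocallyC0 (F n))

/-- The lower integral of `F` against the induced measure `ν`:
`∫ F dν = ∫_{𝒢⁽⁰⁾} Σ_{x ∈ 𝒢^u} F(x) dμ(u)`. -/
def fiberL (g : EtaleGroupoid G) (μ : Measure G) (F : G → ℝ≥0∞) : ℝ≥0∞ :=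
  ∫⁻ u, ∑' x : g.rFiber u, F (x : G) ∂μ

/-- The lower integral of `F` against `ν⁻¹` (source fibres). -/
def fiberLs (g : EtaleGroupoid G) (μ : Measure G) (F : G → ℝ≥0∞) : ℝ≥0∞ :=
  ∫⁻ u, ∑' x : g.sFiber u, F (x : G) ∂μ

/-- The induced measure `ν` of a set. -/
def nu (g : EtaleGroupoid G) (μ : Measure G) (E : Set G) : ℝ≥0∞ :=
  g.fiberL μ (E.indicator 1)

/-- `μ` is a quasi-invariant probability measure on the unit space: the induced
measure `ν` and its image `ν⁻¹` under inversion are mutually absolutely continuous. -/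
def IsQuasiInvariant (g : EtaleGroupoid G) (μ : Measure G) : Prop :=
  IsProbabilityMeasure μ ∧ μ g.unitsᶜ = 0 ∧
    ∀ E : Set G, MeasurableSet E → (g.nu μ E = 0 ↔ g.nu μ (g.inv ⁻¹' E) = 0)

/-- `μ` is an invariant probability measure on the unit space: `ν = ν⁻¹`. -/
def IsInvariant (g : EtaleGroupoid G) (μ : Measure G) : Prop :=
  IsProbabilityMeasure μ ∧ μ g.unitsᶜ = 0 ∧
    ∀ E : Set G, MeasurableSet E → g.nu μ E = g.nu μ (g.inv ⁻¹' E)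

/-- A modular function (Radon–Nikodym derivative `Δ = dν/dν⁻¹`), chosen to be a
Borel homomorphism. -/
structure IsModular (g : EtaleGroupoid G) (μ : Measure G) (Δ : G → ℝ) : Prop where
  meas : Measurable Δ
  pos : ∀ x, 0 < Δ x
  hom : ∀ x y, g.s x = g.r y → Δ (g.mul x y) = Δ x * Δ y
  inv_eq : ∀ x, Δ (g.inv x) = (Δ x)⁻¹
  rn : ∀ F : G → ℝ≥0∞, Measurable F →
    g.fiberL μ F = g.fiberLs μ fun x => F x * ENNReal.ofReal (Δ x)

end EtaleGroupoid

/-- A unitary representation of the groupoid on a Borel Hilbert bundle.  The fibres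
are realized as (closed) subspaces of an ambient Hilbert space `E`; `op x` is a
unitary `H(s x) → H(r x)`, the assignment is a Borel homomorphism (Borel-ness being
expressed through the matrix coefficients of a fundamental sequence of Borel
sections of the bundle). -/
structure GRep {G : Type} [TopologicalSpace G] [MeasurableSpace G] (g : EtaleGroupoid G)
    (E : Type) [NormedAddCommGroup E] [InnerProductSpace ℂ E] [MeasurableSpace E] where
  fib : G → Submodule ℂ E
  op : G → E → E
  mapsTo : ∀ x : G, ∀ v ∈ fib (g.s x), op x v ∈ fib (g.r x)
  map_add : ∀ x : G, ∀ v ∈ fib (g.s x), ∀ w ∈ fib (g.s x), op x (v + w) = op x v + op x w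
  map_smul : ∀ x : G, ∀ c : ℂ, ∀ v ∈ fib (g.s x), op x (c • v) = c • op x v
  inner_op : ∀ x : G, ∀ v ∈ fib (g.s x), ∀ w ∈ fib (g.s x),
    (inner ℂ (op x v) (op x w) : ℂ) = (inner ℂ v w : ℂ)
  surj' : ∀ x : G, ∀ w ∈ fib (g.r x), ∃ v ∈ fib (g.s x), op x v = w
  mul_op : ∀ x y : G, g.s x = g.r y → ∀ v ∈ fib (g.s y), op (g.mul x y) v = op x (op y v)
  unit_op : ∀ u ∈ g.units, ∀ v ∈ fib u, op u v = v
  fundSeq : ℕ → G → E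
  fundSeq_mem : ∀ n : ℕ, ∀ u ∈ g.units, fundSeq n u ∈ fib u
  fundSeq_meas : ∀ n : ℕ, Measurable (fundSeq n)
  fundSeq_dense : ∀ u ∈ g.units, ∀ v ∈ fib u, ∀ ε : ℝ, 0 < ε →
    ∃ w ∈ Submodule.span ℂ (Set.range fun n => fundSeq n u), ‖v - w‖ < ε
  fund_coeff_meas : ∀ n m : ℕ,
    Measurable fun x : G => (inner ℂ (fundSeq m (g.r x)) (op x (fundSeq n (g.s x))) : ℂ)

namespace GRep

variable {G : Type} [TopologicalSpace G] [MeasurableSpace G] {g : EtaleGroupoid G}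
variable {E : Type} [NormedAddCommGroup E] [InnerProductSpace ℂ E] [MeasurableSpace E]

/-- The matrix coefficient `x ↦ ⟨π(x) ξ(s x), η(r x)⟩` (linear in `ξ`). -/
def coeff (π : GRep g E) (ξ η : G → E) : G → ℂ :=
  fun x => (inner ℂ (η (g.r x)) (π.op x (ξ (g.s x))) : ℂ)

/-- A fundamental sequence of Borel sections of the bundle of `π`. -/
structure IsFundSeq (π : GRep g E) (f : ℕ → G → E) : Prop where
  mem : ∀ n : ℕ, ∀ u ∈ g.units, f n u ∈ π.fib u
  meas : ∀ n : ℕ, Measurable (f n)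
  dense : ∀ u ∈ g.units, ∀ v ∈ π.fib u, ∀ ε : ℝ, 0 < ε →
    ∃ w ∈ Submodule.span ℂ (Set.range fun n => f n u), ‖v - w‖ < ε
  coeff_meas : ∀ n m : ℕ, Measurable (π.coeff (f n) (f m))

/-- `π` is a `D`-representation: some fundamental sequence has all its matrix
coefficients in `D`. -/
def IsDRep (π : GRep g E) (D : Set (G → ℂ)) : Prop :=
  ∃ f : ℕ → G → E, π.IsFundSeq f ∧ ∀ n m : ℕ, π.coeff (f n) (f m) ∈ D

/-- A square-integrable Borel section of the bundle of `π`, i.e. a vector of the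
direct integral `∫^⊕ H_π(u) dμ(u)`. -/
structure IsL2Section (π : GRep g E) (μ : MeasureTheory.Measure G) (ξ : G → E) : Prop where
  mem : ∀ u ∈ g.units, ξ u ∈ π.fib u
  meas : Measurable ξ
  sq : MeasureTheory.Integrable (fun u => ‖ξ u‖ ^ 2) μ

/-- `⟨π_μ(f) ξ, η⟩ = ∫_𝒢 f(x) ⟨π(x)ξ(s x), η(r x)⟩ Δ(x)^{-1/2} dν(x)`, the
sesquilinear pairing of the integrated form of `π` w.r.t. `μ` (with modular
function `Δ`). -/
def pairing (π : GRep g E) (μ : MeasureTheory.Measure G) (Δ : G → ℝ) (f : G → ℂ)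
    (ξ η : G → E) : ℂ :=
  ∫ u, (∑' x : g.rFiber u,
    f (x : G) * ((Δ (x : G) ^ (-(1 / 2) : ℝ) : ℝ) : ℂ) * π.coeff ξ η (x : G)) ∂μ

/-- The operator norm `‖π_μ(f)‖` of the integrated form, expressed as the supremum
of the pairings over the unit ball of (the dense subspace of square-integrable
Borel sections of) the direct integral. -/
def intNorm (π : GRep g E) (μ : MeasureTheory.Measure G) (Δ : G → ℝ) (f : G → ℂ) : ℝ :=
  sSup {t : ℝ | ∃ ξ η : G → E, π.IsL2Section μ ξ ∧ π.IsL2Section μ η ∧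
    (∫ u, ‖ξ u‖ ^ 2 ∂μ) ≤ 1 ∧ (∫ u, ‖η u‖ ^ 2 ∂μ) ≤ 1 ∧
    t = ‖π.pairing μ Δ f ξ η‖}

end GRep

namespace EtaleGroupoid

variable {G : Type} [TopologicalSpace G] [MeasurableSpace G]

/-- The set of quasi-invariant probability measures on the unit space. -/
def QIMeasures (g : EtaleGroupoid G) : Set (MeasureTheory.Measure G) :=
  {μ | g.IsQuasiInvariant μ}

/-- The seminorm `‖f‖_{D,ℳ} = sup {‖π_μ(f)‖ : π a D-representation, μ ∈ ℳ}`. -/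
def DNorm (g : EtaleGroupoid G) (D : Set (G → ℂ)) (M : Set (MeasureTheory.Measure G))
    (f : G → ℂ) : ℝ :=
  sSup {t : ℝ | ∃ π : GRep g Hamb, π.IsDRep D ∧ ∃ μ ∈ M, ∃ Δ : G → ℝ,
    g.IsModular μ Δ ∧ t = π.intNorm μ Δ f}

/-- The full norm `‖f‖_max = sup {‖π_μ(f)‖ : π any representation, μ quasi-invariant}`. -/
def maxNorm (g : EtaleGroupoid G) (f : G → ℂ) : ℝ :=
  sSup {t : ℝ | ∃ π : GRep g Hamb, ∃ μ ∈ g.QIMeasures, ∃ Δ : G → ℝ,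
    g.IsModular μ Δ ∧ t = π.intNorm μ Δ f}

/-- `‖Ind(δ_u)(f)‖`: the norm of left convolution by `f` on `ℓ²(𝒢_u)`, expressed as a
supremum of pairings against finitely supported vectors in the unit ball. -/
def IndDeltaNorm (g : EtaleGroupoid G) (u : G) (f : G → ℂ) : ℝ :=
  sSup {t : ℝ | ∃ ξ η : G → ℂ,
    (Function.support ξ).Finite ∧ Function.support ξ ⊆ g.sFiber u ∧
    (Function.support η).Finite ∧ Function.support η ⊆ g.sFiber u ∧
    (∑' x : g.sFiber u, ‖ξ (x : G)‖ ^ 2) ≤ 1 ∧ (∑' x : g.sFiber u, ‖η (x : G)‖ ^ 2) ≤ 1 ∧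
    t = ‖∑' x : g.sFiber u, g.conv f ξ (x : G) * conj (η (x : G))‖}

/-- The reduced norm `‖f‖_r = sup_{u ∈ 𝒢⁽⁰⁾} ‖Ind(δ_u)(f)‖`. -/
def redNorm (g : EtaleGroupoid G) (f : G → ℂ) : ℝ :=
  sSup {t : ℝ | ∃ u ∈ g.units, t = g.IndDeltaNorm u f}

/-- `‖Ind(μ)(f)‖`: the norm of left convolution by `f` on `L²(𝒢, ν⁻¹)`, expressed as a
supremum of pairings against bounded compactly supported Borel functions in the unit
ball of `L²(𝒢, ν⁻¹)`. -/
def IndMuNorm (g : EtaleGroupoid G) (μ : MeasureTheory.Measure G) (f : G → ℂ) : ℝ :=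
  sSup {t : ℝ | ∃ ξ η : G → ℂ, Measurable ξ ∧ Measurable η ∧ BddFun ξ ∧ BddFun η ∧
    HasCompactSupport ξ ∧ HasCompactSupport η ∧
    (∫ u, (∑' x : g.sFiber u, ‖ξ (x : G)‖ ^ 2) ∂μ) ≤ 1 ∧
    (∫ u, (∑' x : g.sFiber u, ‖η (x : G)‖ ^ 2) ∂μ) ≤ 1 ∧
    t = ‖∫ u, (∑' x : g.sFiber u, g.conv f ξ (x : G) * conj (η (x : G))) ∂μ‖}

/-- The norm of `L²(𝒢, ν⁻¹)`. -/
def L2s (g : EtaleGroupoid G) (μ : MeasureTheory.Measure G) (h : G → ℂ) : ℝ :=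
  Real.sqrt (∫ u, (∑' x : g.sFiber u, ‖h (x : G)‖ ^ 2) ∂μ)

/-- Products of `n` elements of `S` (units for `n = 0`). -/
def Spow (g : EtaleGroupoid G) (S : Set G) : ℕ → Set G
  | 0 => g.units
  | n + 1 => {z | ∃ x ∈ S, ∃ y ∈ Spow g S n, g.s x = g.r y ∧ z = g.mul x y}

/-- The ball `∪_{k ≤ n} S^k`. -/
def ball (g : EtaleGroupoid G) (S : Set G) (n : ℕ) : Set G :=
  ⋃ k ∈ Finset.range (n + 1), g.Spow S k

/-- The length function `l_S(x) = min {n ≥ 0 : x ∈ ∪_{k ≤ n} S^k}`. -/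
def lS (g : EtaleGroupoid G) (S : Set G) (x : G) : ℕ := sInf {n : ℕ | x ∈ g.ball S n}

/-- The fibre Cayley-graph metric `d(x, y) = l_S (x⁻¹ y)` (as a real number). -/
def dS (g : EtaleGroupoid G) (S : Set G) (x y : G) : ℝ := (g.lS S (g.mul (g.inv x) y) : ℝ)

/-- `S` is a compact open symmetric generating set making all fibre Cayley graphs
`δ`-hyperbolic; i.e. `𝒢` is a hyperbolic groupoid (witnessed by `S` and `δ`). -/
structure IsHyperbolicGen (g : EtaleGroupoid G) (S : Set G) (δ : ℝ) : Prop where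
  compact : IsCompact S
  isOpen : IsOpen S
  symm : ∀ x ∈ S, g.inv x ∈ S
  gen : ∀ x : G, ∃ n : ℕ, 1 ≤ n ∧ x ∈ g.Spow S n
  delta_pos : 0 < δ
  hyp : ∀ u ∈ g.units, ∀ a ∈ g.rFiber u, ∀ b ∈ g.rFiber u, ∀ c ∈ g.rFiber u,
    ∀ d ∈ g.rFiber u,
      g.dS S a b + g.dS S c d ≤ max (g.dS S a c + g.dS S b d) (g.dS S a d + g.dS S b c) + δ

/-- The ideal `ℒ^p_μ(𝒢)` of bounded Borel functions which are `p`-integrable for the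
induced measure `ν`. -/
def LpIdeal (g : EtaleGroupoid G) (μ : MeasureTheory.Measure G) (p : ℝ) : Set (G → ℂ) :=
  {f | Measurable f ∧ BddFun f ∧
    g.fiberL μ (fun x => ENNReal.ofReal (‖f x‖ ^ p)) ≠ ⊤}

/-- The `ℒ^p_μ`-seminorm `|f|_p`. -/
def lpSeminorm (g : EtaleGroupoid G) (μ : MeasureTheory.Measure G) (p : ℝ) (f : G → ℂ) : ℝ :=
  ((g.fiberL μ fun x => ENNReal.ofReal (‖f x‖ ^ p)).toReal) ^ (1 / p)

/-- `‖f‖_{ℒ^p_μ(𝒢), μ}`: the supremum of `‖π_μ(f)‖` over all `ℒ^p_μ(𝒢)`-representations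
(for an invariant `μ`, so `Δ ≡ 1`). -/
def LpDNorm (g : EtaleGroupoid G) (μ : MeasureTheory.Measure G) (p : ℝ) (f : G → ℂ) : ℝ :=
  sSup {t : ℝ | ∃ π : GRep g Hamb, π.IsDRep (g.LpIdeal μ p) ∧
    t = π.intNorm μ (fun _ => 1) f}

end EtaleGroupoid

/-!
Each matrix coefficient `x ↦ Σ_{y,z ∈ 𝒢^{r x}} f(x⁻¹z) conj(h(y)) α^{l(y⁻¹z)}` of the GNS
representation of `φ_α` is a sum of boundedly many terms: `𝒢` is étale, so the compact supports of
`f, h ∈ C_c(𝒢)` meet every `r`-fibre in at most `N` points. If `l ≤ R` on both supports, the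
triangle inequality for the fibre metric gives `l(x) ≤ l(y⁻¹z) + 2R` for every nonzero term, so the
coefficient is bounded by `C · φ_α`. As `ℒ^p_μ(𝒢)` is solid, it contains the coefficient.
-/

lemma norm_tsum_le_of_injective {ι κ E : Type*} [NormedAddCommGroup E] {f : ι → E}
    {ψ : ι → κ} (hψ : Function.Injective ψ) {t : Set κ} {N : ℕ} (ht : t.encard ≤ N)
    (hft : ∀ i, f i ≠ 0 → ψ i ∈ t) {B : ℝ} (hB0 : 0 ≤ B) (hB : ∀ i, f i ≠ 0 → ‖f i‖ ≤ B) :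
    ‖∑' i, f i‖ ≤ N * B := by
  have hsupp : (Function.support f).encard ≤ N :=
    (Set.encard_le_encard_of_injOn hft hψ.injOn).trans ht
  have hfin := Set.finite_of_encard_le_coe hsupp
  have hcard : (hfin.toFinset.card : ℝ) ≤ N := by
    rw [hfin.encard_eq_coe_toFinset_card] at hsupp
    exact_mod_cast hsupp
  rw [tsum_eq_sum (s := hfin.toFinset) fun i hi => by simpa using hi]
  calc ‖∑ i ∈ hfin.toFinset, f i‖ ≤ ∑ i ∈ hfin.toFinset, ‖f i‖ := norm_sum_le _ _
    _ ≤ hfin.toFinset.card • B :=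
      Finset.sum_le_card_nsmul _ _ _ fun i hi => hB i (by simpa using hi)
    _ ≤ N * B := by rw [nsmul_eq_mul]; exact mul_le_mul_of_nonneg_right hcard hB0

lemma BddFun.exists_nonneg_bound {X : Type} {f : X → ℂ} (hf : BddFun f) :
    ∃ M, 0 ≤ M ∧ ∀ x, ‖f x‖ ≤ M :=
  let ⟨M, hM⟩ := hf
  ⟨max M 0, le_max_right _ _, fun x => (hM x).trans (le_max_left _ _)⟩

namespace EtaleGroupoid

section Algebra

variable {G : Type} [TopologicalSpace G] (g : EtaleGroupoid G)

lemma s_eq_r_inv (x : G) : g.s x = g.r (g.inv x) := by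
  simpa only [g.inv_inv] using g.s_inv (g.inv x)

lemma mul_s_self (x : G) : g.mul x (g.s x) = x := by
  simpa only [g.inv_inv, ← g.s_def] using g.inv_mul_cancel' (g.inv x) x (by rw [g.s_inv])

lemma s_mem_units (x : G) : g.s x ∈ g.units := ⟨g.inv x, (g.s_eq_r_inv x).symm⟩

lemma r_of_mem_units {u : G} (hu : u ∈ g.units) : g.r u = u := by
  obtain ⟨x, rfl⟩ := hu
  rw [g.r_def x, g.r_mul x (g.inv x) (g.s_eq_r_inv x), ← g.r_def]

lemma s_of_mem_units {u : G} (hu : u ∈ g.units) : g.s u = u := by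
  obtain ⟨x, rfl⟩ := hu
  rw [g.r_def x, g.s_mul x (g.inv x) (g.s_eq_r_inv x), g.s_inv, ← g.r_def]

lemma r_mul_self (x : G) : g.mul (g.r x) x = x := by
  conv_lhs => rw [g.r_def x]
  rw [g.mul_assoc' x (g.inv x) x (g.s_eq_r_inv x) (by rw [g.s_inv]), ← g.s_def, g.mul_s_self]

lemma mul_inv_cancel_left {x w : G} (h : g.r x = g.r w) :
    g.mul x (g.mul (g.inv x) w) = w := by
  simpa only [g.inv_inv] using g.inv_mul_cancel' (g.inv x) w (by rw [g.s_inv, h])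

lemma r_inv_mul {x z : G} (h : g.r z = g.r x) : g.r (g.mul (g.inv x) z) = g.s x := by
  rw [g.r_mul _ _ (by rw [g.s_inv, h]), ← g.s_eq_r_inv]

lemma mul_inv_rev {x y : G} (h : g.s x = g.r y) :
    g.inv (g.mul x y) = g.mul (g.inv y) (g.inv x) := by
  set z := g.mul x y
  set w := g.mul (g.inv y) (g.inv x)
  have hcomp : g.s (g.inv y) = g.r (g.inv x) := by rw [g.s_inv, ← g.s_eq_r_inv, ← h]
  have hrw : g.r w = g.s y := by rw [g.r_mul _ _ hcomp, ← g.s_eq_r_inv]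
  have hyw : g.mul y w = g.inv x := g.mul_inv_cancel_left (by rw [← g.s_eq_r_inv, h])
  have hzw : g.mul z w = g.r z := by
    rw [g.mul_assoc' x y w h hrw.symm, hyw, ← g.r_def, g.r_mul x y h]
  have hsz : g.s z = g.r w := by rw [g.s_mul x y h, hrw]
  calc g.inv z = g.mul (g.inv z) (g.s (g.inv z)) := (g.mul_s_self _).symm
    _ = g.mul (g.inv z) (g.mul z w) := by rw [g.s_inv, hzw]
    _ = w := g.inv_mul_cancel' z w hsz

lemma inv_of_mem_units {u : G} (hu : u ∈ g.units) : g.inv u = u := by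
  obtain ⟨x, rfl⟩ := hu
  rw [g.r_def x, g.mul_inv_rev (g.s_eq_r_inv x), g.inv_inv, ← g.r_def]

lemma injective_inv_mul (x : G) :
    Function.Injective fun z : g.rFiber (g.r x) => g.mul (g.inv x) z := by
  intro z₁ z₂ h
  apply Subtype.ext
  rw [← g.mul_inv_cancel_left z₁.2.symm, ← g.mul_inv_cancel_left z₂.2.symm]
  exact congrArg (g.mul x) h

end Algebra

section Length

variable {G : Type} [TopologicalSpace G] (g : EtaleGroupoid G) {S : Set G}

lemma Spow_one : g.Spow S 1 = S := by
  ext z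
  constructor
  · rintro ⟨x, hx, y, hy, hxy, rfl⟩
    rwa [← g.r_of_mem_units hy, ← hxy, g.mul_s_self]
  · exact fun hz => ⟨z, hz, g.s z, g.s_mem_units z, (g.r_of_mem_units (g.s_mem_units z)).symm,
      (g.mul_s_self z).symm⟩

lemma mul_mem_Spow {m n : ℕ} {a b : G} (ha : a ∈ g.Spow S m) (hb : b ∈ g.Spow S n)
    (h : g.s a = g.r b) : g.mul a b ∈ g.Spow S (m + n) := by
  induction m generalizing a with
  | zero =>
    rw [g.s_of_mem_units ha] at h
    rw [h, g.r_mul_self, zero_add]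
    exact hb
  | succ k ih =>
    obtain ⟨x, hx, y, hy, hxy, rfl⟩ := ha
    have hyb : g.s y = g.r b := by rw [← g.s_mul x y hxy, h]
    rw [g.mul_assoc' x y b hxy hyb, Nat.succ_add]
    exact ⟨x, hx, g.mul y b, ih hy hyb, by rw [g.r_mul y b hyb, hxy], rfl⟩

lemma inv_mem_Spow (hsymm : ∀ x ∈ S, g.inv x ∈ S) {n : ℕ} {a : G} (ha : a ∈ g.Spow S n) :
    g.inv a ∈ g.Spow S n := by
  induction n generalizing a with
  | zero => rwa [g.inv_of_mem_units ha]
  | succ k ih =>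
    obtain ⟨x, hx, y, hy, hxy, rfl⟩ := ha
    rw [g.mul_inv_rev hxy]
    refine g.mul_mem_Spow (ih hy) (by rw [g.Spow_one]; exact hsymm x hx) ?_
    rw [g.s_inv, ← g.s_eq_r_inv, ← hxy]

lemma mem_ball_of_mem_Spow {k n : ℕ} (hk : k ≤ n) {x : G} (hx : x ∈ g.Spow S k) :
    x ∈ g.ball S n :=
  Set.mem_biUnion (Finset.mem_range.mpr (Nat.lt_succ_of_le hk)) hx

lemma lS_le_of_mem_Spow {k : ℕ} {x : G} (hx : x ∈ g.Spow S k) : g.lS S x ≤ k :=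
  Nat.sInf_le (g.mem_ball_of_mem_Spow le_rfl hx)

lemma exists_le_lS_mem_Spow (hgen : ∀ x : G, ∃ n : ℕ, 1 ≤ n ∧ x ∈ g.Spow S n) (x : G) :
    ∃ k ≤ g.lS S x, x ∈ g.Spow S k := by
  obtain ⟨n, -, hx⟩ := hgen x
  have hmem : x ∈ g.ball S (g.lS S x) :=
    Nat.sInf_mem (s := {n | x ∈ g.ball S n}) ⟨n, g.mem_ball_of_mem_Spow le_rfl hx⟩
  obtain ⟨k, hk, hxk⟩ := Set.mem_iUnion₂.mp hmem
  exact ⟨k, Nat.lt_succ_iff.mp (Finset.mem_range.mp hk), hxk⟩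

lemma lS_mul_le (hgen : ∀ x : G, ∃ n : ℕ, 1 ≤ n ∧ x ∈ g.Spow S n) {a b : G}
    (h : g.s a = g.r b) : g.lS S (g.mul a b) ≤ g.lS S a + g.lS S b := by
  obtain ⟨k₁, hk₁, ha⟩ := g.exists_le_lS_mem_Spow hgen a
  obtain ⟨k₂, hk₂, hb⟩ := g.exists_le_lS_mem_Spow hgen b
  exact (g.lS_le_of_mem_Spow (g.mul_mem_Spow ha hb h)).trans (by omega)

lemma lS_inv (hgen : ∀ x : G, ∃ n : ℕ, 1 ≤ n ∧ x ∈ g.Spow S n) (hsymm : ∀ x ∈ S, g.inv x ∈ S)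
    (a : G) : g.lS S (g.inv a) = g.lS S a := by
  have lS_inv_le : ∀ b, g.lS S (g.inv b) ≤ g.lS S b := fun b => by
    obtain ⟨k, hk, hb⟩ := g.exists_le_lS_mem_Spow hgen b
    exact (g.lS_le_of_mem_Spow (g.inv_mem_Spow hsymm hb)).trans hk
  refine le_antisymm (lS_inv_le a) ?_
  simpa only [g.inv_inv] using lS_inv_le (g.inv a)

/-- The triangle inequality `d(r x, x) ≤ d(r x, y) + d(y, z) + d(z, x)` in the fibre `𝒢^{r x}`. -/
lemma lS_le_lS_add_lS_inv_mul_add (hgen : ∀ x : G, ∃ n : ℕ, 1 ≤ n ∧ x ∈ g.Spow S n)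
    (hsymm : ∀ x ∈ S, g.inv x ∈ S) {x y z : G}
    (hy : g.r y = g.r x) (hz : g.r z = g.r x) :
    g.lS S x ≤ g.lS S y + g.lS S (g.mul (g.inv y) z) + g.lS S (g.mul (g.inv x) z) := by
  have hzx : g.lS S x ≤ g.lS S z + g.lS S (g.mul (g.inv x) z) := by
    have hinv : g.mul (g.inv z) x = g.inv (g.mul (g.inv x) z) := by
      rw [g.mul_inv_rev (by rw [g.s_inv, hz]), g.inv_inv]
    have := g.lS_mul_le hgen (a := z) (b := g.mul (g.inv z) x) (g.r_inv_mul hz.symm).symm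
    rwa [g.mul_inv_cancel_left hz, hinv, g.lS_inv hgen hsymm] at this
  have hyz : g.lS S z ≤ g.lS S y + g.lS S (g.mul (g.inv y) z) := by
    have := g.lS_mul_le hgen (g.r_inv_mul (hz.trans hy.symm)).symm
    rwa [g.mul_inv_cancel_left (hy.trans hz.symm)] at this
  omega

end Length


section Topology

variable {G : Type} [TopologicalSpace G] (g : EtaleGroupoid G)

lemma isOpen_mul_set {U V : Set G} (hU : IsOpen U) (hV : IsOpen V) :
    IsOpen {z : G | ∃ x ∈ U, ∃ y ∈ V, g.s x = g.r y ∧ z = g.mul x y} := by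
  rw [isOpen_iff_forall_mem_open]
  rintro z ⟨x, hxU, y, hyV, hxy, rfl⟩
  obtain ⟨U₁, hU₁, hxU₁, -, himg⟩ := g.etale x
  have hrz : g.r (g.mul x y) = g.r x := g.r_mul x y hxy
  obtain ⟨U', V', hU', hV', hxU', hzV', hUV⟩ :=
    g.continuous_mul (g.inv x) (g.mul x y) (by rw [g.s_inv, hrz]) V hV
      (by rwa [g.inv_mul_cancel' x y hxy])
  -- a product `z = b · (b⁻¹ z)` near `x · y` is found by lifting `r z` through the bisection `U₁`
  set B : Set G := U ∩ U₁ ∩ g.inv ⁻¹' U'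
  have hB : IsOpen B := (hU.inter hU₁).inter (hU'.preimage g.continuous_inv)
  have hrB : IsOpen (g.r '' B) := himg B (fun w hw => hw.1.2) hB
  refine ⟨V' ∩ g.r ⁻¹' (g.r '' B), ?_, hV'.inter (hrB.preimage g.continuous_r),
    hzV', x, ⟨⟨hxU, hxU₁⟩, hxU'⟩, hrz.symm⟩
  rintro w ⟨hwV', b, hbB, hrb⟩
  have hcomp : g.s (g.inv b) = g.r w := by rw [g.s_inv, hrb]
  exact ⟨b, hbB.1.1, g.mul (g.inv b) w, hUV (g.inv b) hbB.2 w hwV' hcomp,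
    (g.r_inv_mul hrb.symm).symm, (g.mul_inv_cancel_left hrb).symm⟩

lemma isOpen_Spow_succ {S : Set G} (hS : IsOpen S) (n : ℕ) : IsOpen (g.Spow S (n + 1)) := by
  induction n with
  | zero => rwa [g.Spow_one]
  | succ k ih => exact g.isOpen_mul_set hS ih

lemma exists_lS_le_of_isCompact {S : Set G} (hS : IsOpen S)
    (hgen : ∀ x : G, ∃ n : ℕ, 1 ≤ n ∧ x ∈ g.Spow S n) {K : Set G} (hK : IsCompact K) :
    ∃ R : ℕ, ∀ x ∈ K, g.lS S x ≤ R := by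
  have hcov : K ⊆ ⋃ n : ℕ, g.Spow S (n + 1) := fun x _ => by
    obtain ⟨n, hn, hx⟩ := hgen x
    obtain ⟨k, rfl⟩ := Nat.exists_eq_add_of_le' hn
    exact Set.mem_iUnion.mpr ⟨k, hx⟩
  obtain ⟨t, ht⟩ := hK.elim_finite_subcover _ (g.isOpen_Spow_succ hS) hcov
  refine ⟨t.sup id + 1, fun x hx => ?_⟩
  obtain ⟨n, hn, hxn⟩ := Set.mem_iUnion₂.mp (ht hx)
  exact (g.lS_le_of_mem_Spow hxn).trans (Nat.succ_le_succ (Finset.le_sup (f := id) hn))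

/-- Each bisection of a finite cover of `K` meets an `r`-fibre at most once. -/
lemma exists_encard_inter_rFiber_le {K : Set G} (hK : IsCompact K) :
    ∃ N : ℕ, ∀ u : G, (K ∩ g.rFiber u).encard ≤ N := by
  choose U hU hxU hinj _ using g.etale
  obtain ⟨t, ht⟩ := hK.elim_finite_subcover U hU fun x _ => Set.mem_iUnion.mpr ⟨x, hxU x⟩
  refine ⟨t.card, fun u => ?_⟩
  have hsub : K ∩ g.rFiber u ⊆ ⋃ x ∈ t, U x ∩ g.rFiber u := fun w ⟨hwK, hwu⟩ => by
    obtain ⟨x, hxt, hwU⟩ := Set.mem_iUnion₂.mp (ht hwK)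
    exact Set.mem_biUnion hxt ⟨hwU, hwu⟩
  have hone : ∀ x, (U x ∩ g.rFiber u).encard ≤ 1 := fun x =>
    Set.encard_le_one_iff_subsingleton.mpr fun a ⟨haU, hau⟩ b ⟨hbU, hbu⟩ =>
      hinj x haU hbU (hau.trans hbu.symm)
  calc (K ∩ g.rFiber u).encard ≤ (⋃ x ∈ t, U x ∩ g.rFiber u).encard := Set.encard_le_encard hsub
    _ ≤ ∑ x ∈ t, (U x ∩ g.rFiber u).encard := t.set_encard_biUnion_le _
    _ ≤ t.card • 1 := Finset.sum_le_card_nsmul _ _ _ fun x _ => hone x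
    _ = t.card := by simp

end Topology

section GNS

variable {G : Type} [TopologicalSpace G] (g : EtaleGroupoid G)

/-- `φ_α = α ^ l_S`. -/
def lengthPow (S : Set G) (α : ℝ) (x : G) : ℂ := ((α ^ g.lS S x : ℝ) : ℂ)

/-- The matrix coefficient `⟨π_F(x) f|_{𝒢^{s x}}, h|_{𝒢^{r x}}⟩` of the GNS representation. -/
def gnsCoeff (F f h : G → ℂ) (x : G) : ℂ :=
  ∑' y : g.rFiber (g.r x), ∑' z : g.rFiber (g.r x),
    f (g.mul (g.inv x) z) * conj (h y) * F (g.mul (g.inv y) z)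

lemma norm_lengthPow {S : Set G} {α : ℝ} (hα : 0 ≤ α) (x : G) :
    ‖g.lengthPow S α x‖ = α ^ g.lS S x := by
  rw [lengthPow, Complex.norm_real, Real.norm_of_nonneg (pow_nonneg hα _)]

lemma exists_norm_gnsCoeff_lengthPow_le {S : Set G} (hS : IsOpen S)
    (hsymm : ∀ x ∈ S, g.inv x ∈ S) (hgen : ∀ x : G, ∃ n : ℕ, 1 ≤ n ∧ x ∈ g.Spow S n)
    {α : ℝ} (hα0 : 0 < α) (hα1 : α ≤ 1) {f h : G → ℂ}
    (hf : HasCompactSupport f) (hfb : BddFun f) (hh : HasCompactSupport h) (hhb : BddFun h) :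
    ∃ C : ℝ, ∀ x, ‖g.gnsCoeff (g.lengthPow S α) f h x‖ ≤ C * α ^ g.lS S x := by
  obtain ⟨Mf, hMf0, hMf⟩ := hfb.exists_nonneg_bound
  obtain ⟨Mh, hMh0, hMh⟩ := hhb.exists_nonneg_bound
  obtain ⟨Rf, hRf⟩ := g.exists_lS_le_of_isCompact hS hgen hf
  obtain ⟨Rh, hRh⟩ := g.exists_lS_le_of_isCompact hS hgen hh
  obtain ⟨Nf, hNf⟩ := g.exists_encard_inter_rFiber_le hf
  obtain ⟨Nh, hNh⟩ := g.exists_encard_inter_rFiber_le hh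
  refine ⟨Nh * Nf * Mf * Mh / α ^ (Rf + Rh), fun x => ?_⟩
  set B := Mf * Mh * (α ^ g.lS S x / α ^ (Rf + Rh))
  have hB0 : 0 ≤ B := by positivity
  have hterm : ∀ y z : g.rFiber (g.r x), f (g.mul (g.inv x) z) ≠ 0 → h y ≠ 0 →
      ‖f (g.mul (g.inv x) z) * conj (h y) * g.lengthPow S α (g.mul (g.inv y) z)‖ ≤ B := by
    intro y z hfz hhy
    have hlen := g.lS_le_lS_add_lS_inv_mul_add hgen hsymm y.2 z.2
    have hlf := hRf _ (subset_tsupport f hfz)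
    have hlh := hRh _ (subset_tsupport h hhy)
    have hpow : α ^ g.lS S (g.mul (g.inv y) z) ≤ α ^ g.lS S x / α ^ (Rf + Rh) := by
      rw [le_div_iff₀ (by positivity), ← pow_add]
      exact pow_le_pow_of_le_one hα0.le hα1 (by omega)
    rw [norm_mul, norm_mul, RCLike.norm_conj, g.norm_lengthPow hα0.le]
    exact mul_le_mul (mul_le_mul (hMf _) (hMh _) (norm_nonneg _) hMf0) hpow
      (pow_nonneg hα0.le _) (by positivity)
  have hinner : ∀ y : g.rFiber (g.r x), ‖∑' z : g.rFiber (g.r x),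
      f (g.mul (g.inv x) z) * conj (h y) * g.lengthPow S α (g.mul (g.inv y) z)‖ ≤ Nf * B :=
    fun y => norm_tsum_le_of_injective (g.injective_inv_mul x) (hNf (g.s x))
      (fun z hz => ⟨subset_tsupport f (left_ne_zero_of_mul (left_ne_zero_of_mul hz)),
        g.r_inv_mul z.2⟩) hB0
      (fun z hz => hterm y z (left_ne_zero_of_mul (left_ne_zero_of_mul hz))
        ((map_ne_zero _).mp (right_ne_zero_of_mul (left_ne_zero_of_mul hz))))
  calc ‖g.gnsCoeff (g.lengthPow S α) f h x‖ ≤ Nh * (Nf * B) :=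
        norm_tsum_le_of_injective Subtype.val_injective (hNh (g.r x))
          (fun y hy => ⟨subset_tsupport h fun h0 => hy (by simp [h0]), y.2⟩)
          (by positivity) fun y _ => hinner y
    _ = Nh * Nf * Mf * Mh / α ^ (Rf + Rh) * α ^ g.lS S x := by ring

lemma mem_LpIdeal_of_norm_le [MeasurableSpace G] {μ : Measure G} {p : ℝ} (hp : 0 ≤ p)
    {φ f : G → ℂ} (hφ : φ ∈ g.LpIdeal μ p) (hf : Measurable f) {C : ℝ}
    (hle : ∀ x, ‖f x‖ ≤ C * ‖φ x‖) :
    f ∈ g.LpIdeal μ p := by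
  obtain ⟨-, ⟨M, hM⟩, hφp⟩ := hφ
  have hle' : ∀ x, ‖f x‖ ≤ |C| * ‖φ x‖ := fun x =>
    (hle x).trans (mul_le_mul_of_nonneg_right (le_abs_self C) (norm_nonneg _))
  refine ⟨hf, ⟨|C| * M, fun x => (hle' x).trans (by gcongr; exact hM x)⟩, ?_⟩
  have hpt : ∀ x, ENNReal.ofReal (‖f x‖ ^ p) ≤
      ENNReal.ofReal (|C| ^ p) * ENNReal.ofReal (‖φ x‖ ^ p) := fun x => by
    rw [← ENNReal.ofReal_mul (by positivity), ← Real.mul_rpow (abs_nonneg C) (norm_nonneg _)]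
    exact ENNReal.ofReal_le_ofReal (Real.rpow_le_rpow (norm_nonneg _) (hle' x) hp)
  refine ne_top_of_le_ne_top (ENNReal.mul_ne_top (ENNReal.ofReal_ne_top (r := |C| ^ p)) hφp) ?_
  rw [fiberL, fiberL, ← lintegral_const_mul' _ _ ENNReal.ofReal_ne_top]
  refine lintegral_mono fun u => ?_
  rw [← ENNReal.tsum_mul_left]
  exact ENNReal.tsum_le_tsum fun x => hpt x

end GNS

end EtaleGroupoid

section Statements

variable {G : Type} [TopologicalSpace G] [T2Space G] [SecondCountableTopology G]
  [LocallyCompactSpace G] [MeasurableSpace G] [BorelSpace G]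

/-- `π` is (a realization of) the GNS representation associated to the bounded positive
definite function `F`: it carries a fundamental sequence given by the restrictions
`σ(f_n)` of a sup-norm dense sequence `{f_n} ⊆ C_c(𝒢)`, whose matrix coefficients are
`⟨π_F(x) σ(f_n)(s x), σ(f_m)(r x)⟩ = Σ_{y,z ∈ 𝒢^{r x}} f_n(x⁻¹z) conj(f_m(y)) F(y⁻¹z)`. -/
def IsGNSRepOf (g : EtaleGroupoid G) {E : Type} [NormedAddCommGroup E]
    [InnerProductSpace ℂ E] [MeasurableSpace E] (F : G → ℂ) (π : GRep g E) : Prop :=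
  ∃ fs : ℕ → G → ℂ, (∀ n, g.IsCc (fs n)) ∧
    (∀ h : G → ℂ, g.IsCc h → ∀ ε : ℝ, 0 < ε → ∃ n, ∀ x : G, ‖h x - fs n x‖ < ε) ∧
    ∃ σ : ℕ → G → E, π.IsFundSeq σ ∧
      ∀ n m : ℕ, π.coeff (σ n) (σ m) = fun x : G =>
        ∑' y : g.rFiber (g.r x), ∑' z : g.rFiber (g.r x),
          fs n (g.mul (g.inv x) (z : G)) * conj (fs m (y : G)) *
            F (g.mul (g.inv (y : G)) (z : G))

theorem gns_of_phi_alpha_is_lp_rep_general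
    (g : EtaleGroupoid G) (S : Set G) (δ : ℝ) (hS : g.IsHyperbolicGen S δ)
    (μ : MeasureTheory.Measure G)
    (α : ℝ) (hα0 : 0 < α) (hα1 : α < 1) (p : ℝ) (hp : 1 ≤ p)
    (hmem : (fun x : G => ((α ^ g.lS S x : ℝ) : ℂ)) ∈ g.LpIdeal μ p)
    (E : Type) [NormedAddCommGroup E] [InnerProductSpace ℂ E] [MeasurableSpace E]
    (π : GRep g E)
    (hπ : IsGNSRepOf g (fun x : G => ((α ^ g.lS S x : ℝ) : ℂ)) π) :
    π.IsDRep (g.LpIdeal μ p) := by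
  obtain ⟨fs, hfs, -, σ, hσ, hcoeff⟩ := hπ
  have hbdd : ∀ n, BddFun (fs n) := fun n => (hfs n).2.exists_bound_of_continuous (hfs n).1
  refine ⟨σ, hσ, fun n m => ?_⟩
  obtain ⟨C, hC⟩ := g.exists_norm_gnsCoeff_lengthPow_le hS.isOpen hS.symm hS.gen hα0 hα1.le
    (hfs n).2 (hbdd n) (hfs m).2 (hbdd m)
  have hcoeff' : π.coeff (σ n) (σ m) = g.gnsCoeff (g.lengthPow S α) (fs n) (fs m) :=
    hcoeff n m
  rw [hcoeff']
  exact g.mem_LpIdeal_of_norm_le (φ := g.lengthPow S α) (by linarith) hmem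
    (hcoeff' ▸ hσ.coeff_meas n m) fun x => (hC x).trans_eq (by rw [g.norm_lengthPow hα0.le])

/-- Let `𝒢` be hyperbolic with generating set `S`, `μ` invariant,
`α ∈ (0,1)`, `p ∈ [1,∞)`.  If `φ_α = α^{l_S(·)}` belongs to `ℒ^p_μ(𝒢)`, then the GNS
representation of `𝒢` associated to `φ_α` is an `ℒ^p_μ(𝒢)`-representation. -/
theorem gns_of_phi_alpha_is_lp_rep
    (g : EtaleGroupoid G) (S : Set G) (δ : ℝ) (hS : g.IsHyperbolicGen S δ)
    (μ : MeasureTheory.Measure G) (hinv : g.IsInvariant μ)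
    (α : ℝ) (hα0 : 0 < α) (hα1 : α < 1) (p : ℝ) (hp : 1 ≤ p)
    (hmem : (fun x : G => ((α ^ g.lS S x : ℝ) : ℂ)) ∈ g.LpIdeal μ p)
    (E : Type) [NormedAddCommGroup E] [InnerProductSpace ℂ E] [MeasurableSpace E]
    (π : GRep g E)
    (hπ : IsGNSRepOf g (fun x : G => ((α ^ g.lS S x : ℝ) : ℂ)) π) :
    π.IsDRep (g.LpIdeal μ p) :=
  gns_of_phi_alpha_is_lp_rep_general g S δ hS μ α hα0 hα1 p hp hmem E π hπ
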